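/- arXiv:1407.8303 — 4 statements merged into one kernel-verified Lean document; each statement's English description precedes it below -/
import Mathlib

section
/- Let k ∈ ℕ and s ∈ (k−1, k). Let u and v be k times continuously differentiable on [−1, 1], and assume I_−^{k−s} u is k times continuously differentiable on [−1, 1]. Then ∫_{−1}^{1} D_−^s u(x) · v(x) dx = ∫_{−1}^{1} u(x) · ^C D_+^s v(x) dx + Σ_{j=0}^{k−1} (−1)^j [ v^{(j)}(x) · (d/dx)^{k−j−1}[I_−^{k−s} u](x) ] evaluated from x = −1 to x = 1. -/
/-!
Since `D_-^s u` is the `k`-th derivative of `g = I_-^{k-s} u`, integrating by parts `k` times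
moves every derivative onto `v` and leaves the boundary sum together with `(-1)^k ∫ g v^{(k)}`.
Written out, that last term is a double integral over the triangle `-1 < y < x < 1` against the
kernel `(x - y)^{k-s-1}`, which is integrable because `k - s > 0`; exchanging the order of
integration turns it into `∫ u · ^C D_+^s v`.
-/

open MeasureTheory Filter Finset

/-- Jacobi polynomial with real parameters. -/
noncomputable def jacobiP (a b : ℝ) (n : ℕ) (x : ℝ) : ℝ :=
  ∑ j ∈ Finset.range (n + 1),
    ((ascPochhammer ℝ j).eval ((n : ℝ) + a + b + 1) / (Nat.factorial j : ℝ)) *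
      ((ascPochhammer ℝ (n - j)).eval (a + (j : ℝ) + 1) / (Nat.factorial (n - j) : ℝ)) *
      ((x - 1) / 2) ^ j

/-- Right Riemann-Liouville fractional integral on (-1,1). -/
noncomputable def Iplus (ρ : ℝ) (v : ℝ → ℝ) (x : ℝ) : ℝ :=
  (1 / Real.Gamma ρ) * ∫ y in x..1, (y - x) ^ (ρ - 1) * v y

/-- Left Riemann-Liouville fractional integral on (-1,1). -/
noncomputable def Iminus (ρ : ℝ) (v : ℝ → ℝ) (x : ℝ) : ℝ :=
  (1 / Real.Gamma ρ) * ∫ y in (-1 : ℝ)..x, (x - y) ^ (ρ - 1) * v y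

/-- Right Riemann-Liouville fractional derivative of order `s ∈ [k-1,k)`. -/
noncomputable def Dplus (s : ℝ) (k : ℕ) (v : ℝ → ℝ) (x : ℝ) : ℝ :=
  (-1 : ℝ) ^ k * iteratedDeriv k (Iplus ((k : ℝ) - s) v) x

/-- Left Riemann-Liouville fractional derivative of order `s ∈ [k-1,k)`. -/
noncomputable def Dminus (s : ℝ) (k : ℕ) (v : ℝ → ℝ) (x : ℝ) : ℝ :=
  iteratedDeriv k (Iminus ((k : ℝ) - s) v) x

/-- Right Caputo fractional derivative of order `s ∈ [k-1,k)`, with derivatives of `v`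
taken within `[-1,1]`. -/
noncomputable def CDplusW (s : ℝ) (k : ℕ) (v : ℝ → ℝ) (x : ℝ) : ℝ :=
  ((-1 : ℝ) ^ k / Real.Gamma ((k : ℝ) - s)) *
    ∫ y in x..1, (y - x) ^ ((k : ℝ) - s - 1) *
      iteratedDerivWithin k v (Set.Icc (-1) 1) y

open scoped Topology

theorem iteratedDerivWithin_of_mem_nhds {𝕜 F : Type*} [NontriviallyNormedField 𝕜]
    [NormedAddCommGroup F] [NormedSpace 𝕜 F] {s : Set 𝕜} {x : 𝕜} (hs : s ∈ 𝓝 x)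
    (n : ℕ) (f : 𝕜 → F) : iteratedDerivWithin n f s x = iteratedDeriv n f x := by
  rw [← iteratedDerivWithin_univ, iteratedDerivWithin, iteratedDerivWithin,
    iteratedFDerivWithin_congr_set (eventuallyEq_univ.2 hs)]

section IntegrationByParts

variable {a b : ℝ} {f w : ℝ → ℝ}

theorem integral_derivWithin_mul_eq_sub (hab : a < b) (hf : ContDiffOn ℝ 1 f (Set.Icc a b))
    (hw : ContDiffOn ℝ 1 w (Set.Icc a b)) :
    ∫ x in a..b, derivWithin f (Set.Icc a b) x * w x =
      f b * w b - f a * w a - ∫ x in a..b, f x * derivWithin w (Set.Icc a b) x := by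
  have hUD := uniqueDiffOn_Icc hab
  have hderiv : ∀ {g : ℝ → ℝ}, ContDiffOn ℝ 1 g (Set.Icc a b) →
      ∀ x ∈ Set.uIcc a b,
        HasDerivWithinAt g (derivWithin g (Set.Icc a b) x) (Set.uIcc a b) x := by
    intro g hg x hx
    rw [Set.uIcc_of_le hab.le] at hx ⊢
    exact (hg.differentiableOn one_ne_zero x hx).hasDerivWithinAt
  have hint : ∀ {g : ℝ → ℝ}, ContDiffOn ℝ 1 g (Set.Icc a b) →
      IntervalIntegrable (derivWithin g (Set.Icc a b)) volume a b := fun hg =>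
    (hg.continuousOn_derivWithin hUD le_rfl).intervalIntegrable_of_Icc hab.le
  have hprod := intervalIntegral.integral_deriv_mul_eq_sub_of_hasDerivWithinAt
    (hderiv hf) (hderiv hw) (hint hf) (hint hw)
  rw [intervalIntegral.integral_add
    ((hint hf).mul_continuousOn (hw.continuousOn.mono (Set.uIcc_of_le hab.le).subset))
    ((hint hw).continuousOn_mul (hf.continuousOn.mono (Set.uIcc_of_le hab.le).subset))] at hprod
  linarith

theorem integral_iteratedDerivWithin_mul_eq (hab : a < b) {n : ℕ}
    (hf : ContDiffOn ℝ n f (Set.Icc a b)) (hw : ContDiffOn ℝ n w (Set.Icc a b)) :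
    ∫ x in a..b, iteratedDerivWithin n f (Set.Icc a b) x * w x =
      (-1) ^ n * (∫ x in a..b, f x * iteratedDerivWithin n w (Set.Icc a b) x) +
        ∑ j ∈ range n, (-1) ^ j *
          (iteratedDerivWithin j w (Set.Icc a b) b *
              iteratedDerivWithin (n - j - 1) f (Set.Icc a b) b -
            iteratedDerivWithin j w (Set.Icc a b) a *
              iteratedDerivWithin (n - j - 1) f (Set.Icc a b) a) := by
  have hUD := uniqueDiffOn_Icc hab
  induction n generalizing f with
  | zero => simp
  | succ n ih =>
    set S := Set.Icc a b
    have hwn : ContDiffOn ℝ n w S := hw.of_le (by norm_cast; omega)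
    have hlast := integral_derivWithin_mul_eq_sub hab (hf.of_le (by norm_cast; omega))
      ((contDiffOn_nat_succ_iff_contDiffOn_one_iteratedDerivWithin hUD).1 hw).2
    rw [← iteratedDerivWithin_succ] at hlast
    have hshift : ∀ j ∈ range n, iteratedDerivWithin (n - j - 1) (derivWithin f S) S =
        iteratedDerivWithin (n + 1 - j - 1) f S := by
      intro j hj
      rw [show n + 1 - j - 1 = n - j - 1 + 1 by grind, iteratedDerivWithin_succ']
    rw [iteratedDerivWithin_succ', ih (hf.derivWithin hUD (by norm_cast)) hwn, hlast,
      sum_range_succ, sum_congr rfl fun j hj => by rw [hshift j hj]]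
    simp only [Nat.add_sub_cancel_left, Nat.sub_self, iteratedDerivWithin_zero, pow_succ]
    ring

end IntegrationByParts

section RpowKernel

variable {a b ρ : ℝ} {U W : ℝ → ℝ}

theorem intervalIntegrable_rpow_sub_left (hρ : 0 < ρ) (a x : ℝ) :
    IntervalIntegrable (fun y => (x - y) ^ (ρ - 1)) volume a x := by
  simpa using (intervalIntegral.intervalIntegrable_rpow' (a := x - a) (b := 0)
    (by linarith : -1 < ρ - 1)).comp_sub_left x

theorem integral_rpow_sub_left (hρ : 0 < ρ) (a x : ℝ) :
    ∫ y in a..x, (x - y) ^ (ρ - 1) = (x - a) ^ ρ / ρ := by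
  rw [intervalIntegral.integral_comp_sub_left (fun t => t ^ (ρ - 1)),
    integral_rpow (Or.inl (by linarith)), sub_self, sub_add_cancel,
    Real.zero_rpow hρ.ne', sub_zero]

theorem intervalIntegrable_rpow_sub_mul (hρ : 0 < ρ) (hU : ContinuousOn U (Set.Icc a b))
    {x : ℝ} (hx : x ∈ Set.Icc a b) :
    IntervalIntegrable (fun y => (x - y) ^ (ρ - 1) * U y) volume a x :=
  (intervalIntegrable_rpow_sub_left hρ a x).mul_continuousOn
    (hU.mono (by rw [Set.uIcc_of_le hx.1]; exact Set.Icc_subset_Icc_right hx.2))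

theorem Ioc_inter_Iio_of_le {x : ℝ} (hx : x ≤ b) : Set.Ioc a b ∩ Set.Iio x = Set.Ioo a x := by
  ext y
  simp only [Set.mem_inter_iff, Set.mem_Ioc, Set.mem_Iio, Set.mem_Ioo]
  constructor
  · rintro ⟨⟨hay, -⟩, hyx⟩; exact ⟨hay, hyx⟩
  · rintro ⟨hay, hyx⟩; exact ⟨⟨hay, by linarith⟩, hyx⟩

theorem setIntegral_Ioc_indicator_Iio {x : ℝ} (hx : x ∈ Set.Icc a b) (g : ℝ → ℝ) :
    ∫ y in Set.Ioc a b, (Set.Iio x).indicator g y = ∫ y in a..x, g y := by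
  rw [setIntegral_indicator measurableSet_Iio, Ioc_inter_Iio_of_le hx.2,
    ← integral_Ioc_eq_integral_Ioo, intervalIntegral.integral_of_le hx.1]

theorem integrableOn_Ioc_indicator_Iio {x : ℝ} (hx : x ∈ Set.Icc a b) {g : ℝ → ℝ}
    (hg : IntervalIntegrable g volume a x) :
    IntegrableOn ((Set.Iio x).indicator g) (Set.Ioc a b) := by
  rw [IntegrableOn, integrable_indicator_iff measurableSet_Iio, IntegrableOn,
    Measure.restrict_restrict measurableSet_Iio, Set.inter_comm, Ioc_inter_Iio_of_le hx.2]
  exact (intervalIntegrable_iff_integrableOn_Ioo_of_le hx.1).1 hg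

theorem setIntegral_Ioc_indicator_Ioi {y : ℝ} (hy : y ∈ Set.Icc a b) (g : ℝ → ℝ) :
    ∫ x in Set.Ioc a b, (Set.Ioi y).indicator g x = ∫ x in y..b, g x := by
  rw [setIntegral_indicator measurableSet_Ioi, Set.Ioc_inter_Ioi, sup_eq_right.2 hy.1,
    intervalIntegral.integral_of_le hy.2]

noncomputable def volterraIntegrand (ρ : ℝ) (U W : ℝ → ℝ) (x : ℝ) : ℝ → ℝ :=
  (Set.Iio x).indicator fun y => (x - y) ^ (ρ - 1) * U y * W x

theorem volterraIntegrand_swap (ρ : ℝ) (U W : ℝ → ℝ) (y : ℝ) :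
    (fun x => volterraIntegrand ρ U W x y) =
      (Set.Ioi y).indicator fun x => (x - y) ^ (ρ - 1) * U y * W x := by
  ext x
  simp [volterraIntegrand, Set.indicator_apply]

theorem aestronglyMeasurable_uncurry_volterraIntegrand (hU : ContinuousOn U (Set.Icc a b))
    (hW : ContinuousOn W (Set.Icc a b)) :
    AEStronglyMeasurable (Function.uncurry (volterraIntegrand ρ U W))
      ((volume.restrict (Set.Ioc a b)).prod (volume.restrict (Set.Ioc a b))) := by
  have hmono := Measure.restrict_mono (μ := volume) Set.Ioc_subset_Icc_self (le_refl _)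
    (s := Set.Ioc a b) (s' := Set.Icc a b)
  have hU' := (hU.aestronglyMeasurable measurableSet_Icc).mono_measure hmono
  have hW' := (hW.aestronglyMeasurable measurableSet_Icc).mono_measure hmono
  have htriangle : Function.uncurry (volterraIntegrand ρ U W) =
      {p : ℝ × ℝ | p.2 < p.1}.indicator fun p => (p.1 - p.2) ^ (ρ - 1) * U p.2 * W p.1 := by
    ext ⟨x, y⟩
    simp [volterraIntegrand, Set.indicator_apply]
  rw [htriangle]
  exact ((((measurable_fst.sub measurable_snd).pow_const _).aestronglyMeasurable.mul
    hU'.comp_snd).mul hW'.comp_fst).indicator (measurableSet_lt measurable_snd measurable_fst)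

theorem integral_norm_volterraIntegrand_le (hρ : 0 < ρ) (hU : ContinuousOn U (Set.Icc a b))
    {C : ℝ} (hC : ∀ y ∈ Set.Icc a b, ‖U y‖ ≤ C) {x : ℝ} (hx : x ∈ Set.Icc a b) :
    ∫ y in Set.Ioc a b, ‖volterraIntegrand ρ U W x y‖ ≤
      (b - a) ^ ρ / ρ * C * ‖W x‖ := by
  have hC0 : 0 ≤ C := (norm_nonneg _).trans (hC x hx)
  have hpointwise : ∀ y ∈ Set.Icc a x,
      ‖(x - y) ^ (ρ - 1) * U y * W x‖ ≤ (x - y) ^ (ρ - 1) * (C * ‖W x‖) := by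
    intro y hy
    have hker : 0 ≤ (x - y) ^ (ρ - 1) := Real.rpow_nonneg (by linarith [hy.2]) _
    rw [norm_mul, norm_mul, Real.norm_of_nonneg hker, mul_assoc]
    gcongr
    exact hC y ⟨hy.1, hy.2.trans hx.2⟩
  calc ∫ y in Set.Ioc a b, ‖volterraIntegrand ρ U W x y‖
      = ∫ y in a..x, ‖(x - y) ^ (ρ - 1) * U y * W x‖ := by
        simp_rw [volterraIntegrand, norm_indicator_eq_indicator_norm]
        exact setIntegral_Ioc_indicator_Iio hx _
    _ ≤ ∫ y in a..x, (x - y) ^ (ρ - 1) * (C * ‖W x‖) :=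
        intervalIntegral.integral_mono_on hx.1
          ((intervalIntegrable_rpow_sub_mul hρ hU hx).mul_const _).norm
          ((intervalIntegrable_rpow_sub_left hρ a x).mul_const _) hpointwise
    _ = (x - a) ^ ρ / ρ * C * ‖W x‖ := by
        rw [intervalIntegral.integral_mul_const, integral_rpow_sub_left hρ, mul_assoc]
    _ ≤ (b - a) ^ ρ / ρ * C * ‖W x‖ := by
        gcongr
        · linarith [hx.1]
        · exact hx.2

theorem integrable_uncurry_volterraIntegrand (hab : a ≤ b) (hρ : 0 < ρ)
    (hU : ContinuousOn U (Set.Icc a b)) (hW : ContinuousOn W (Set.Icc a b)) :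
    Integrable (Function.uncurry (volterraIntegrand ρ U W))
      ((volume.restrict (Set.Ioc a b)).prod (volume.restrict (Set.Ioc a b))) := by
  obtain ⟨CU, hCU⟩ := isCompact_Icc.exists_bound_of_continuousOn hU
  obtain ⟨CW, hCW⟩ := isCompact_Icc.exists_bound_of_continuousOn hW
  have hmeas := aestronglyMeasurable_uncurry_volterraIntegrand (ρ := ρ) hU hW
  refine (integrable_prod_iff hmeas).2 ⟨?_, ?_⟩
  · refine (ae_restrict_iff' measurableSet_Ioc).2 <| Eventually.of_forall fun x hx => ?_
    have hx' := Set.Ioc_subset_Icc_self hx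
    exact integrableOn_Ioc_indicator_Iio hx'
      ((intervalIntegrable_rpow_sub_mul hρ hU hx').mul_const (W x))
  · refine Integrable.mono' (integrable_const ((b - a) ^ ρ / ρ * CU * CW))
      hmeas.norm.integral_prod_right' ((ae_restrict_iff' measurableSet_Ioc).2 <|
        Eventually.of_forall fun x hx => ?_)
    have hx' := Set.Ioc_subset_Icc_self hx
    rw [Real.norm_of_nonneg (integral_nonneg fun _ => norm_nonneg _)]
    refine (integral_norm_volterraIntegrand_le hρ hU hCU hx').trans ?_
    have hCU0 : 0 ≤ CU := (norm_nonneg _).trans (hCU a ⟨le_rfl, hab⟩)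
    exact mul_le_mul_of_nonneg_left (hCW x hx')
      (mul_nonneg (div_nonneg (Real.rpow_nonneg (sub_nonneg.2 hab) _) hρ.le) hCU0)

theorem integral_integral_rpow_sub_mul_swap (hab : a ≤ b) (hρ : 0 < ρ)
    (hU : ContinuousOn U (Set.Icc a b)) (hW : ContinuousOn W (Set.Icc a b)) :
    ∫ x in a..b, (∫ y in a..x, (x - y) ^ (ρ - 1) * U y) * W x =
      ∫ y in a..b, U y * ∫ x in y..b, (x - y) ^ (ρ - 1) * W x := by
  calc ∫ x in a..b, (∫ y in a..x, (x - y) ^ (ρ - 1) * U y) * W x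
      = ∫ x in Set.Ioc a b, ∫ y in Set.Ioc a b, volterraIntegrand ρ U W x y := by
        rw [intervalIntegral.integral_of_le hab]
        refine setIntegral_congr_fun measurableSet_Ioc fun x hx => ?_
        rw [volterraIntegrand, setIntegral_Ioc_indicator_Iio (Set.Ioc_subset_Icc_self hx)]
        exact (intervalIntegral.integral_mul_const (W x) _).symm
    _ = ∫ y in Set.Ioc a b, ∫ x in Set.Ioc a b, volterraIntegrand ρ U W x y :=
        integral_integral_swap (integrable_uncurry_volterraIntegrand hab hρ hU hW)
    _ = ∫ y in a..b, U y * ∫ x in y..b, (x - y) ^ (ρ - 1) * W x := by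
        rw [intervalIntegral.integral_of_le hab]
        refine setIntegral_congr_fun measurableSet_Ioc fun y hy => ?_
        rw [volterraIntegrand_swap, setIntegral_Ioc_indicator_Ioi (Set.Ioc_subset_Icc_self hy),
          ← intervalIntegral.integral_const_mul]
        congr with x
        ring

end RpowKernel

theorem stmt1_general (k : ℕ) (s : ℝ) (hs2 : s < k)
    (u v : ℝ → ℝ)
    (hu : ContDiffOn ℝ k u (Set.Icc (-1) 1))
    (hv : ContDiffOn ℝ k v (Set.Icc (-1) 1))
    (hIu : ContDiffOn ℝ k (Iminus ((k : ℝ) - s) u) (Set.Icc (-1) 1)) :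
    ∫ x in (-1 : ℝ)..1, Dminus s k u x * v x =
      (∫ x in (-1 : ℝ)..1, u x * CDplusW s k v x) +
        ∑ j ∈ Finset.range k, (-1 : ℝ) ^ j *
          (iteratedDerivWithin j v (Set.Icc (-1) 1) 1 *
              iteratedDerivWithin (k - j - 1) (Iminus ((k : ℝ) - s) u) (Set.Icc (-1) 1) 1 -
            iteratedDerivWithin j v (Set.Icc (-1) 1) (-1) *
              iteratedDerivWithin (k - j - 1) (Iminus ((k : ℝ) - s) u) (Set.Icc (-1) 1) (-1)) := by
  have hρ : 0 < (k : ℝ) - s := sub_pos.2 hs2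
  have hlt : (-1 : ℝ) < 1 := by norm_num
  have hD : ∫ x in (-1 : ℝ)..1, Dminus s k u x * v x =
      ∫ x in (-1 : ℝ)..1,
        iteratedDerivWithin k (Iminus ((k : ℝ) - s) u) (Set.Icc (-1) 1) x * v x := by
    simp only [intervalIntegral.integral_of_le hlt.le, integral_Ioc_eq_integral_Ioo]
    refine setIntegral_congr_fun measurableSet_Ioo fun x hx => ?_
    rw [Dminus, iteratedDerivWithin_of_mem_nhds (Icc_mem_nhds hx.1 hx.2)]
  rw [hD, integral_iteratedDerivWithin_mul_eq hlt hIu hv]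
  congr 1
  calc (-1) ^ k * ∫ x in (-1 : ℝ)..1,
        Iminus ((k : ℝ) - s) u x * iteratedDerivWithin k v (Set.Icc (-1) 1) x
      = (-1) ^ k / Real.Gamma ((k : ℝ) - s) * ∫ x in (-1 : ℝ)..1,
          (∫ y in (-1 : ℝ)..x, (x - y) ^ ((k : ℝ) - s - 1) * u y) *
            iteratedDerivWithin k v (Set.Icc (-1) 1) x := by
        simp only [Iminus, mul_assoc, intervalIntegral.integral_const_mul]
        ring
    _ = (-1) ^ k / Real.Gamma ((k : ℝ) - s) * ∫ y in (-1 : ℝ)..1, u y *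
          ∫ x in y..1,
            (x - y) ^ ((k : ℝ) - s - 1) * iteratedDerivWithin k v (Set.Icc (-1) 1) x := by
        rw [integral_integral_rpow_sub_mul_swap hlt.le hρ hu.continuousOn
          (hv.continuousOn_iteratedDerivWithin le_rfl (uniqueDiffOn_Icc hlt))]
    _ = ∫ x in (-1 : ℝ)..1, u x * CDplusW s k v x := by
        rw [← intervalIntegral.integral_const_mul]
        refine intervalIntegral.integral_congr fun y _ => ?_
        simp only [CDplusW]
        ring

/-- Lemma 2.3, first identity: fractional integration by parts. -/
theorem stmt1 (k : ℕ) (hk : 1 ≤ k) (s : ℝ) (hs1 : (k : ℝ) - 1 < s) (hs2 : s < k)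
    (u v : ℝ → ℝ)
    (hu : ContDiffOn ℝ k u (Set.Icc (-1) 1))
    (hv : ContDiffOn ℝ k v (Set.Icc (-1) 1))
    (hIu : ContDiffOn ℝ k (Iminus ((k : ℝ) - s) u) (Set.Icc (-1) 1)) :
    ∫ x in (-1 : ℝ)..1, Dminus s k u x * v x =
      (∫ x in (-1 : ℝ)..1, u x * CDplusW s k v x) +
        ∑ j ∈ Finset.range k, (-1 : ℝ) ^ j *
          (iteratedDerivWithin j v (Set.Icc (-1) 1) 1 *
              iteratedDerivWithin (k - j - 1) (Iminus ((k : ℝ) - s) u) (Set.Icc (-1) 1) 1 -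
            iteratedDerivWithin j v (Set.Icc (-1) 1) (-1) *
              iteratedDerivWithin (k - j - 1) (Iminus ((k : ℝ) - s) u) (Set.Icc (-1) 1) (-1)) :=
  stmt1_general k s hs2 u v hu hv hIu
end

section
/- Let ρ > 0, α > −1, β ∈ ℝ, and n ∈ ℕ. Then for every x ∈ (−1, 1), I_+^ρ[ (1−·)^α P_n^{(α,β)} ](x) = [Γ(n+α+1)/Γ(n+α+ρ+1)] · (1−x)^{α+ρ} · P_n^{(α+ρ, β−ρ)}(x). -/
/-!
Substituting `y = x + (1 - x) t` turns `I₊^ρ[(1 - ·)^γ](x)` into `(1 - x)^(γ + ρ) / Γ(ρ)` times the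
Beta integral `B(ρ, γ + 1)`, so `I₊^ρ` sends `(1 - ·)^γ` to `Γ(γ + 1) / Γ(γ + ρ + 1) · (1 - x)^(γ + ρ)`.
Expanding `(1 - y)^α P_n^(α,β)(y)` in the powers `(1 - y)^(α + j)` and integrating termwise, the
Gamma ratios `Γ(α + j + 1) / Γ(α + j + ρ + 1)` turn the coefficients of `P_n^(α,β)` into those of
`P_n^(α+ρ,β-ρ)`, up to the common factor `Γ(n + α + 1) / Γ(n + α + ρ + 1)`.
-/

open MeasureTheory Filter Finset

lemma Complex.ofReal_cpow_mul_one_sub_cpow {t : ℝ} (ht : t ∈ Set.Icc (0 : ℝ) 1) (a b : ℝ) :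
    (t : ℂ) ^ ((a : ℂ) - 1) * (1 - (t : ℂ)) ^ ((b : ℂ) - 1)
      = ((t ^ (a - 1) * (1 - t) ^ (b - 1) : ℝ) : ℂ) := by
  rw [Complex.ofReal_mul, Complex.ofReal_cpow ht.1, Complex.ofReal_cpow (by linarith [ht.2])]
  push_cast
  ring

namespace Real

lemma intervalIntegrable_rpow_mul_one_sub_rpow {a b : ℝ} (ha : 0 < a) (hb : 0 < b) :
    IntervalIntegrable (fun t : ℝ => t ^ (a - 1) * (1 - t) ^ (b - 1)) volume 0 1 := by
  have hℂ : IntervalIntegrable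
      (fun t : ℝ => ((t ^ (a - 1) * (1 - t) ^ (b - 1) : ℝ) : ℂ)) volume 0 1 := by
    refine (Complex.betaIntegral_convergent (u := a) (v := b) (by simpa) (by simpa)).congr
      fun t ht => ?_
    rw [Set.uIoc_of_le zero_le_one] at ht
    exact Complex.ofReal_cpow_mul_one_sub_cpow ⟨ht.1.le, ht.2⟩ a b
  rw [intervalIntegrable_iff] at hℂ ⊢
  simpa [IntegrableOn] using hℂ.re

lemma integral_rpow_mul_one_sub_rpow {a b : ℝ} (ha : 0 < a) (hb : 0 < b) :
    ∫ t in (0 : ℝ)..1, t ^ (a - 1) * (1 - t) ^ (b - 1) = Gamma a * Gamma b / Gamma (a + b) := by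
  have hbeta : Complex.betaIntegral a b
      = ((∫ t in (0 : ℝ)..1, t ^ (a - 1) * (1 - t) ^ (b - 1) : ℝ) : ℂ) := by
    rw [Complex.betaIntegral, ← intervalIntegral.integral_ofReal]
    refine intervalIntegral.integral_congr fun t ht => ?_
    rw [Set.uIcc_of_le zero_le_one] at ht
    exact Complex.ofReal_cpow_mul_one_sub_cpow ht a b
  have h := Complex.Gamma_mul_Gamma_eq_betaIntegral (s := a) (t := b) (by simpa) (by simpa)
  rw [hbeta, ← Complex.ofReal_add, Complex.Gamma_ofReal, Complex.Gamma_ofReal,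
    Complex.Gamma_ofReal, ← Complex.ofReal_mul, ← Complex.ofReal_mul] at h
  rw [eq_div_iff (Gamma_pos_of_pos (add_pos ha hb)).ne', mul_comm]
  exact_mod_cast h.symm

lemma ascPochhammer_eval_eq_Gamma_div {a : ℝ} (ha : 0 < a) (m : ℕ) :
    (ascPochhammer ℝ m).eval a = Gamma (a + m) / Gamma a := by
  rw [eq_div_iff (Gamma_pos_of_pos ha).ne']
  induction m with
  | zero => simp
  | succ k ih =>
    rw [Nat.cast_succ, ← add_assoc, Gamma_add_one (by positivity), ← ih,
      ascPochhammer_succ_right]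
    simp only [Polynomial.eval_mul, Polynomial.eval_add, Polynomial.eval_X,
      Polynomial.eval_natCast]
    ring

end Real

section FractionalIntegral

variable {ρ x : ℝ}

lemma Iplus_congr {v w : ℝ → ℝ} (h : Set.EqOn v w (Set.uIcc x 1)) :
    Iplus ρ v x = Iplus ρ w x := by
  unfold Iplus
  congr 1
  exact intervalIntegral.integral_congr fun y hy => by rw [h hy]

lemma Iplus_eq_integral_unitInterval (v : ℝ → ℝ) (hx : x < 1) :
    Iplus ρ v x
      = (1 - x) ^ ρ / Real.Gamma ρ * ∫ t in (0 : ℝ)..1, t ^ (ρ - 1) * v (x + (1 - x) * t) := by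
  have hx' : 0 < 1 - x := sub_pos.mpr hx
  have hsub := intervalIntegral.smul_integral_comp_mul_add (a := (0 : ℝ)) (b := 1)
    (fun y => (y - x) ^ (ρ - 1) * v y) (1 - x) x
  simp only [mul_zero, zero_add, mul_one, sub_add_cancel, smul_eq_mul] at hsub
  have hcongr : ∀ t ∈ Set.uIcc (0 : ℝ) 1, ((1 - x) * t + x - x) ^ (ρ - 1) * v ((1 - x) * t + x)
      = (1 - x) ^ (ρ - 1) * (t ^ (ρ - 1) * v (x + (1 - x) * t)) := by
    intro t ht
    rw [Set.uIcc_of_le zero_le_one] at ht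
    rw [add_sub_cancel_right, Real.mul_rpow hx'.le ht.1, add_comm x]
    ring
  rw [Iplus, ← hsub, intervalIntegral.integral_congr hcongr, intervalIntegral.integral_const_mul,
    Real.rpow_sub_one hx'.ne']
  field_simp

lemma Iplus_sum_one_sub_rpow {ι : Type*} (s : Finset ι) (c γ : ι → ℝ) (hρ : 0 < ρ)
    (hγ : ∀ j ∈ s, -1 < γ j) (hx : x < 1) :
    Iplus ρ (fun y => ∑ j ∈ s, c j * (1 - y) ^ γ j) x
      = ∑ j ∈ s, c j * (Real.Gamma (γ j + 1) / Real.Gamma (γ j + ρ + 1) * (1 - x) ^ (γ j + ρ)) := by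
  have hx' : 0 < 1 - x := sub_pos.mpr hx
  have hγ' : ∀ j ∈ s, 0 < γ j + 1 := fun j hj => by linarith [hγ j hj]
  have hcongr : ∀ t ∈ Set.uIcc (0 : ℝ) 1,
      t ^ (ρ - 1) * ∑ j ∈ s, c j * (1 - (x + (1 - x) * t)) ^ γ j
        = ∑ j ∈ s, c j * (1 - x) ^ γ j * (t ^ (ρ - 1) * (1 - t) ^ (γ j + 1 - 1)) := by
    intro t ht
    rw [Set.uIcc_of_le zero_le_one] at ht
    rw [mul_sum]
    refine sum_congr rfl fun j _ => ?_
    rw [show 1 - (x + (1 - x) * t) = (1 - x) * (1 - t) by ring,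
      Real.mul_rpow hx'.le (by linarith [ht.2]), add_sub_cancel_right]
    ring
  rw [Iplus_eq_integral_unitInterval _ hx, intervalIntegral.integral_congr hcongr,
    intervalIntegral.integral_finsetSum fun j hj =>
      (Real.intervalIntegrable_rpow_mul_one_sub_rpow hρ (hγ' j hj)).const_mul _,
    mul_sum]
  refine sum_congr rfl fun j hj => ?_
  rw [intervalIntegral.integral_const_mul,
    Real.integral_rpow_mul_one_sub_rpow hρ (hγ' j hj), Real.rpow_add hx',
    show ρ + (γ j + 1) = γ j + ρ + 1 by ring]
  have := Real.Gamma_pos_of_pos hρ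
  have := Real.Gamma_pos_of_pos (show 0 < γ j + ρ + 1 by linarith [hγ' j hj])
  field_simp

end FractionalIntegral

section Jacobi

noncomputable def jacobiCoeff (a b : ℝ) (n j : ℕ) : ℝ :=
  (ascPochhammer ℝ j).eval ((n : ℝ) + a + b + 1) / (Nat.factorial j : ℝ) *
    ((ascPochhammer ℝ (n - j)).eval (a + (j : ℝ) + 1) / (Nat.factorial (n - j) : ℝ))

lemma jacobiP_eq_sum (a b : ℝ) (n : ℕ) (x : ℝ) :
    jacobiP a b n x = ∑ j ∈ range (n + 1), jacobiCoeff a b n j * ((x - 1) / 2) ^ j :=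
  rfl

lemma one_sub_rpow_mul_jacobiP {a : ℝ} (b : ℝ) (n : ℕ) (ha : -1 < a) {y : ℝ} (hy : y ≤ 1) :
    (1 - y) ^ a * jacobiP a b n y
      = ∑ j ∈ range (n + 1), jacobiCoeff a b n j * (-1 / 2) ^ j * (1 - y) ^ (a + j) := by
  rw [jacobiP_eq_sum, mul_sum]
  refine sum_congr rfl fun j _ => ?_
  have hpow : (1 - y) ^ (a + j) = (1 - y) ^ a * (1 - y) ^ j := by
    rcases Nat.eq_zero_or_pos j with rfl | hj
    · simp
    · exact Real.rpow_add_natCast' (sub_nonneg.mpr hy)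
        (ne_of_gt (by have : (1 : ℝ) ≤ j := (by exact_mod_cast hj); linarith))
  rw [hpow, show (y - 1) / 2 = -1 / 2 * (1 - y) by ring, mul_pow]
  ring

/-- The shift `a ↦ a + ρ`, `b ↦ b - ρ` keeps `n + a + b + 1`, and
`(a + j + 1)_(n - j) = Γ(n + a + 1) / Γ(a + j + 1)`. -/
lemma jacobiCoeff_mul_Gamma_div_Gamma {a ρ : ℝ} (b : ℝ) {n j : ℕ} (ha : -1 < a) (hρ : 0 < ρ)
    (hj : j ≤ n) :
    jacobiCoeff a b n j * (Real.Gamma (a + j + 1) / Real.Gamma (a + j + ρ + 1))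
      = Real.Gamma (n + a + 1) / Real.Gamma (n + a + ρ + 1) * jacobiCoeff (a + ρ) (b - ρ) n j := by
  have hj0 : (0 : ℝ) < a + j + 1 := by linarith [(Nat.cast_nonneg j : (0 : ℝ) ≤ j)]
  have hjn : (j : ℝ) ≤ n := Nat.cast_le.mpr hj
  have hcast : ((n - j : ℕ) : ℝ) = n - j := Nat.cast_sub hj
  rw [jacobiCoeff, jacobiCoeff, Real.ascPochhammer_eval_eq_Gamma_div hj0,
    Real.ascPochhammer_eval_eq_Gamma_div (show 0 < a + ρ + j + 1 by linarith), hcast,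
    show (n : ℝ) + (a + ρ) + (b - ρ) + 1 = n + a + b + 1 by ring,
    show a + j + 1 + (n - j) = n + a + 1 by ring,
    show a + ρ + j + 1 + (n - j) = n + a + ρ + 1 by ring,
    show a + ρ + j + 1 = a + j + ρ + 1 by ring]
  have := Real.Gamma_pos_of_pos hj0
  have := Real.Gamma_pos_of_pos (show 0 < a + j + ρ + 1 by linarith)
  have := Real.Gamma_pos_of_pos (show 0 < n + a + 1 by linarith)
  have := Real.Gamma_pos_of_pos (show 0 < n + a + ρ + 1 by linarith)
  field_simp

end Jacobi

/-- Lemma 2.5, right integral / Bateman formula. -/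
theorem stmt2 (ρ α β : ℝ) (hρ : 0 < ρ) (hα : -1 < α) (n : ℕ) :
    ∀ x ∈ Set.Ioo (-1 : ℝ) 1,
      Iplus ρ (fun y => (1 - y) ^ α * jacobiP α β n y) x =
        Real.Gamma ((n : ℝ) + α + 1) / Real.Gamma ((n : ℝ) + α + ρ + 1) *
          ((1 - x) ^ (α + ρ) * jacobiP (α + ρ) (β - ρ) n x) := by
  rintro x ⟨-, hx⟩
  have hαj : ∀ j ∈ range (n + 1), -1 < α + j := fun j _ => by
    linarith [(Nat.cast_nonneg j : (0 : ℝ) ≤ j)]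
  calc Iplus ρ (fun y => (1 - y) ^ α * jacobiP α β n y) x
      = Iplus ρ (fun y => ∑ j ∈ range (n + 1),
          jacobiCoeff α β n j * (-1 / 2) ^ j * (1 - y) ^ (α + j)) x :=
        Iplus_congr fun y hy => one_sub_rpow_mul_jacobiP β n hα
          (by rw [Set.uIcc_of_le hx.le] at hy; exact hy.2)
    _ = ∑ j ∈ range (n + 1), jacobiCoeff α β n j * (-1 / 2) ^ j *
          (Real.Gamma (α + j + 1) / Real.Gamma (α + j + ρ + 1) * (1 - x) ^ (α + j + ρ)) :=
        Iplus_sum_one_sub_rpow _ _ _ hρ hαj hx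
    _ = _ := by
      rw [one_sub_rpow_mul_jacobiP (β - ρ) n (by linarith) hx.le, mul_sum]
      refine sum_congr rfl fun j hj => ?_
      rw [show α + ρ + j = α + j + ρ by ring]
      linear_combination (-1 / 2) ^ j * (1 - x) ^ (α + j + ρ) *
        jacobiCoeff_mul_Gamma_div_Gamma β hα hρ (Nat.lt_succ_iff.mp (mem_range.mp hj))
end

section
/- Let ρ > 0, α ∈ ℝ, β > −1, and n ∈ ℕ. Then for every x ∈ (−1, 1), I_−^ρ[ (1+·)^β P_n^{(α,β)} ](x) = [Γ(n+β+1)/Γ(n+β+ρ+1)] · (1+x)^{β+ρ} · P_n^{(α−ρ, β+ρ)}(x). -/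
open MeasureTheory Filter Finset

/-
Re-expanding the defining sum in powers of `(1 + y) / 2` (by the Chu–Vandermonde identity for
rising factorials) gives `(1 + y)^β P_n^{(α,β)}(y) = Γ(n+β+1) Σ_j c_j (1 + y)^(β+j) / Γ(β+j+1)`,
where `c_j` depends on `α` and `β` only through `n + α + β + 1`. By the Beta integral, `I_-^ρ` sends
`(1 + y)^γ / Γ(γ+1)` to `(1 + x)^(γ+ρ) / Γ(γ+ρ+1)`, so it replaces `β` by `β + ρ` term by term; the
result is the same expansion of `(1 + x)^(β+ρ) P_n^{(α-ρ,β+ρ)}(x)`, up to the factor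
`Γ(n+β+1) / Γ(n+β+ρ+1)`.
-/

section Pochhammer

open Polynomial

theorem ascPochhammer_eval_neg_sub_add_one {R : Type*} [CommRing R] (x : R) (k : ℕ) :
    (ascPochhammer R k).eval (-x - k + 1) = (-1) ^ k * (ascPochhammer R k).eval x := by
  rw [← descPochhammer_eval_eq_ascPochhammer, ← neg_neg x, ascPochhammer_eval_neg_eq_descPochhammer,
    neg_neg, ← mul_assoc, ← pow_add, Even.neg_one_pow ⟨k, rfl⟩, one_mul]

-- Chu–Vandermonde for rising factorials, from the falling-factorial version via
-- `(x)_k = (-1)^k (-x)^(k falling)`.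
theorem ascPochhammer_eval_add {R : Type*} [CommRing R] (x y : R) (k : ℕ) :
    (ascPochhammer R k).eval (x + y) = ∑ p ∈ antidiagonal k,
      k.choose p.1 * ((ascPochhammer R p.1).eval x * (ascPochhammer R p.2).eval y) := by
  have hdesc : ∀ (m : ℕ) (r : R), (descPochhammer ℤ m).smeval r =
      (-1) ^ m * (ascPochhammer R m).eval (-r) := fun m r => by
    rw [descPochhammer_smeval_eq_ascPochhammer, ascPochhammer_smeval_eq_eval,
      ← ascPochhammer_eval_neg_sub_add_one, neg_neg]
  have h := Ring.descPochhammer_smeval_add k (Commute.all (-x) (-y))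
  rw [← neg_add, hdesc, neg_neg] at h
  refine (isUnit_neg_one.pow k).mul_left_cancel (h.trans ?_)
  rw [mul_sum]
  refine sum_congr rfl fun p hp => ?_
  rw [hdesc, hdesc, neg_neg, neg_neg, ← mem_antidiagonal.mp hp, pow_add]
  ring

theorem ascPochhammer_eval_add_div_factorial {K : Type*} [Field K] [CharZero K] (x y : K) (k : ℕ) :
    (ascPochhammer K k).eval (x + y) / k.factorial = ∑ p ∈ antidiagonal k,
      (ascPochhammer K p.1).eval x / p.1.factorial *
        ((ascPochhammer K p.2).eval y / p.2.factorial) := by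
  rw [ascPochhammer_eval_add, sum_div]
  refine sum_congr rfl fun p hp => ?_
  rw [← mem_antidiagonal.mp hp, Nat.choose_symm_add, ← Nat.add_choose_mul_factorial_mul_factorial]
  have hchoose : ((p.1 + p.2).choose p.2 : K) ≠ 0 := by
    exact_mod_cast (Nat.choose_pos (Nat.le_add_left _ _)).ne'
  push_cast
  field_simp

theorem ascPochhammer_add_eval {R : Type*} [CommRing R] (x : R) (k l : ℕ) :
    (ascPochhammer R (k + l)).eval x =
      (ascPochhammer R k).eval x * (ascPochhammer R l).eval (x + k) := by
  rw [← ascPochhammer_mul, eval_mul, eval_comp, eval_add, eval_X, eval_natCast]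

end Pochhammer

theorem Real.ascPochhammer_eval_mul_Gamma {x : ℝ} (hx : ∀ k : ℕ, x ≠ -k) (n : ℕ) :
    (ascPochhammer ℝ n).eval x * Real.Gamma x = Real.Gamma (x + n) := by
  induction n with
  | zero => simp
  | succ n ih =>
    have hxn : x + n ≠ 0 := fun h => hx n (eq_neg_of_add_eq_zero_left h)
    rw [ascPochhammer_succ_eval, mul_right_comm, ih, Nat.cast_succ, ← add_assoc,
      Real.Gamma_add_one hxn, mul_comm]

theorem ascPochhammer_eval_neg_sub_mul_Gamma {c : ℝ} (hc : -1 < c) {j n : ℕ} (hj : j ≤ n) :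
    (ascPochhammer ℝ (n - j)).eval (-n - c) * Real.Gamma (c + j + 1) =
      (-1) ^ (n - j) * Real.Gamma (n + c + 1) := by
  obtain ⟨m, rfl⟩ := Nat.exists_eq_add_of_le hj
  have hpos : 0 < c + j + 1 := by linarith [(j.cast_nonneg : (0 : ℝ) ≤ j)]
  rw [Nat.add_sub_cancel_left,
    show -((j + m : ℕ) : ℝ) - c = -(c + j + 1) - m + 1 by push_cast; ring,
    ascPochhammer_eval_neg_sub_add_one, mul_assoc,
    Real.ascPochhammer_eval_mul_Gamma (fun k h => by linarith [(k.cast_nonneg : (0 : ℝ) ≤ k)])]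
  push_cast
  congr 2
  ring

-- With `j = k + l` and `n = k + m` this is the Chu–Vandermonde convolution of `(T + k)_l / l!` and
-- `(-n - b)_(m-l) / (m-l)!`, where `T = n + a + b + 1`, and `T + k - n - b = a + k + 1`.
theorem sum_Ico_jacobi_coeff_mul_choose (a b : ℝ) {k n : ℕ} (hk : k ≤ n) :
    ∑ j ∈ Ico k (n + 1), (ascPochhammer ℝ j).eval (n + a + b + 1) / j.factorial *
        ((ascPochhammer ℝ (n - j)).eval (-n - b) / (n - j).factorial) * j.choose k =
      (ascPochhammer ℝ k).eval (n + a + b + 1) / k.factorial *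
        ((ascPochhammer ℝ (n - k)).eval (a + k + 1) / (n - k).factorial) := by
  obtain ⟨m, rfl⟩ := Nat.exists_eq_add_of_le hk
  set T : ℝ := ((k + m : ℕ) : ℝ) + a + b + 1 with hT
  have hterm : ∀ l ∈ range (m + 1),
      (ascPochhammer ℝ (k + l)).eval T / (k + l).factorial *
        ((ascPochhammer ℝ (k + m - (k + l))).eval (-(k + m : ℕ) - b) /
          (k + m - (k + l)).factorial) * (k + l).choose k =
      (ascPochhammer ℝ k).eval T / k.factorial *
        ((ascPochhammer ℝ l).eval (T + k) / l.factorial *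
          ((ascPochhammer ℝ (m - l)).eval (-(k + m : ℕ) - b) / (m - l).factorial)) := by
    intro l _
    have hchoose : ((k + l).choose l : ℝ) ≠ 0 := by
      exact_mod_cast (Nat.choose_pos (Nat.le_add_left _ _)).ne'
    rw [Nat.add_sub_add_left, ascPochhammer_add_eval, Nat.choose_symm_add,
      ← Nat.add_choose_mul_factorial_mul_factorial]
    push_cast
    field_simp
  have hvandermonde := ascPochhammer_eval_add_div_factorial (T + k) (-(k + m : ℕ) - b) m
  rw [Nat.sum_antidiagonal_eq_sum_range_succ_mk, Nat.succ_eq_add_one] at hvandermonde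
  rw [sum_Ico_eq_sum_range, show k + m + 1 - k = m + 1 by omega, sum_congr rfl hterm, ← mul_sum,
    ← hvandermonde, Nat.add_sub_cancel_left]
  congr 3
  rw [hT]
  push_cast
  ring

theorem jacobiP_eq_sum_one_add_div_two_pow (a b : ℝ) (n : ℕ) (x : ℝ) :
    jacobiP a b n x = ∑ j ∈ range (n + 1), (ascPochhammer ℝ j).eval (n + a + b + 1) / j.factorial *
        ((ascPochhammer ℝ (n - j)).eval (-n - b) / (n - j).factorial) * ((1 + x) / 2) ^ j := by
  rw [show (1 + x) / 2 = (x - 1) / 2 + 1 by ring]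
  simp_rw [add_pow, one_pow, mul_one, mul_sum, range_eq_Ico]
  rw [← sum_Ico_Ico_comm, jacobiP, range_eq_Ico]
  refine sum_congr rfl fun k hk => ?_
  rw [← sum_Ico_jacobi_coeff_mul_choose a b (by simpa [Nat.lt_succ_iff] using hk), sum_mul]
  exact sum_congr rfl fun j _ => by ring

theorem one_add_rpow_mul_jacobiP_eq_Gamma_mul_sum (a : ℝ) {b : ℝ} (hb : -1 < b) (n : ℕ) {y : ℝ}
    (hy : -1 < y) :
    (1 + y) ^ b * jacobiP a b n y = Real.Gamma (n + b + 1) *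
      ∑ j ∈ range (n + 1), (ascPochhammer ℝ j).eval (n + a + b + 1) / j.factorial *
        ((-1) ^ (n - j) / (n - j).factorial) / 2 ^ j *
          ((1 + y) ^ (b + j) / Real.Gamma (b + j + 1)) := by
  rw [jacobiP_eq_sum_one_add_div_two_pow, mul_sum, mul_sum]
  refine sum_congr rfl fun j hj => ?_
  have hjn : j ≤ n := Nat.lt_succ_iff.mp (mem_range.mp hj)
  have hΓ : Real.Gamma (b + j + 1) ≠ 0 :=
    (Real.Gamma_pos_of_pos (by linarith [(j.cast_nonneg : (0 : ℝ) ≤ j)])).ne'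
  rw [eq_div_of_mul_eq hΓ (ascPochhammer_eval_neg_sub_mul_Gamma hb hjn),
    Real.rpow_add_natCast (by linarith), div_pow]
  field_simp

theorem Real.integral_rpow_mul_one_sub_rpow_s3 {p q : ℝ} (hp : 0 < p) (hq : 0 < q) :
    ∫ t in (0 : ℝ)..1, t ^ (p - 1) * (1 - t) ^ (q - 1) =
      Real.Gamma p * Real.Gamma q / Real.Gamma (p + q) := by
  have hbeta : Complex.betaIntegral p q =
      ((∫ t in (0 : ℝ)..1, t ^ (p - 1) * (1 - t) ^ (q - 1) : ℝ) : ℂ) := by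
    rw [Complex.betaIntegral, ← intervalIntegral.integral_ofReal]
    refine intervalIntegral.integral_congr fun t ht => ?_
    rw [Set.uIcc_of_le zero_le_one] at ht
    push_cast
    rw [Complex.ofReal_cpow ht.1, Complex.ofReal_cpow (sub_nonneg.mpr ht.2)]
    push_cast
    ring
  have h := Complex.Gamma_mul_Gamma_eq_betaIntegral (s := p) (t := q)
    (by simpa using hp) (by simpa using hq)
  rw [hbeta, ← Complex.ofReal_add, Complex.Gamma_ofReal, Complex.Gamma_ofReal,
    Complex.Gamma_ofReal] at h
  have hne : Real.Gamma (p + q) ≠ 0 := (Real.Gamma_pos_of_pos (by linarith)).ne'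
  rw [eq_div_iff hne, mul_comm]
  exact_mod_cast h.symm

theorem integral_sub_rpow_mul_one_add_rpow {γ ρ x : ℝ} (hγ : -1 < γ) (hρ : 0 < ρ) (hx : -1 < x) :
    ∫ y in (-1 : ℝ)..x, (x - y) ^ (ρ - 1) * (1 + y) ^ γ =
      Real.Gamma (γ + 1) * Real.Gamma ρ / Real.Gamma (γ + ρ + 1) * (1 + x) ^ (γ + ρ) := by
  set c : ℝ := 1 + x with hc
  have hcpos : 0 < c := by linarith
  have hsub := intervalIntegral.integral_comp_mul_add
    (fun y => (x - y) ^ (ρ - 1) * (1 + y) ^ γ) hcpos.ne' (-1) (a := 0) (b := 1)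
  rw [mul_zero, zero_add, mul_one, show c + -1 = x by rw [hc]; ring] at hsub
  have hintegrand : ∀ t ∈ Set.uIcc (0 : ℝ) 1,
      (x - (c * t + -1)) ^ (ρ - 1) * (1 + (c * t + -1)) ^ γ =
        c ^ (ρ - 1) * c ^ γ * (t ^ (γ + 1 - 1) * (1 - t) ^ (ρ - 1)) := by
    intro t ht
    rw [Set.uIcc_of_le zero_le_one] at ht
    rw [show x - (c * t + -1) = c * (1 - t) by rw [hc]; ring, show 1 + (c * t + -1) = c * t by ring,
      Real.mul_rpow hcpos.le (sub_nonneg.mpr ht.2), Real.mul_rpow hcpos.le ht.1,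
      add_sub_cancel_right]
    ring
  rw [intervalIntegral.integral_congr hintegrand, intervalIntegral.integral_const_mul,
    Real.integral_rpow_mul_one_sub_rpow_s3 (by linarith) hρ, smul_eq_mul,
    eq_inv_mul_iff_mul_eq₀ hcpos.ne'] at hsub
  rw [← hsub, show γ + 1 + ρ = γ + ρ + 1 by ring, Real.rpow_add hcpos, Real.rpow_sub_one hcpos.ne']
  field_simp

theorem intervalIntegrable_sub_rpow_mul_one_add_rpow {γ ρ x : ℝ} (hγ : -1 < γ) (hρ : 0 < ρ)
    (hx : -1 < x) :
    IntervalIntegrable (fun y => (x - y) ^ (ρ - 1) * (1 + y) ^ γ) volume (-1) x := by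
  -- The evaluation above did not assume integrability, and its value is nonzero.
  refine intervalIntegral.intervalIntegrable_of_integral_ne_zero ?_
  rw [integral_sub_rpow_mul_one_add_rpow hγ hρ hx]
  have := Real.Gamma_pos_of_pos (show 0 < γ + 1 by linarith)
  have := Real.Gamma_pos_of_pos hρ
  have := Real.Gamma_pos_of_pos (show 0 < γ + ρ + 1 by linarith)
  have := Real.rpow_pos_of_pos (show 0 < 1 + x by linarith) (γ + ρ)
  positivity

theorem Iminus_congr {ρ x : ℝ} {v w : ℝ → ℝ} (h : ∀ y ∈ Set.uIoc (-1) x, v y = w y) :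
    Iminus ρ v x = Iminus ρ w x := by
  rw [Iminus, Iminus, intervalIntegral.integral_congr_ae (ae_of_all _ fun y hy => by rw [h y hy])]

theorem Iminus_const_mul (ρ c : ℝ) (v : ℝ → ℝ) (x : ℝ) :
    Iminus ρ (fun y => c * v y) x = c * Iminus ρ v x := by
  simp only [Iminus, mul_left_comm _ c, intervalIntegral.integral_const_mul]

theorem Iminus_finset_sum {ι : Type*} {ρ x : ℝ} (s : Finset ι) (v : ι → ℝ → ℝ)
    (hv : ∀ i ∈ s, IntervalIntegrable (fun y => (x - y) ^ (ρ - 1) * v i y) volume (-1) x) :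
    Iminus ρ (fun y => ∑ i ∈ s, v i y) x = ∑ i ∈ s, Iminus ρ (v i) x := by
  simp only [Iminus, mul_sum, intervalIntegral.integral_finsetSum hv]

theorem Iminus_one_add_rpow {γ ρ x : ℝ} (hγ : -1 < γ) (hρ : 0 < ρ) (hx : -1 < x) :
    Iminus ρ (fun y => (1 + y) ^ γ) x =
      Real.Gamma (γ + 1) / Real.Gamma (γ + ρ + 1) * (1 + x) ^ (γ + ρ) := by
  rw [Iminus, integral_sub_rpow_mul_one_add_rpow hγ hρ hx]
  field_simp [(Real.Gamma_pos_of_pos hρ).ne']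

theorem Iminus_sum_mul_one_add_rpow_div_Gamma {ι : Type*} {ρ x : ℝ} (s : Finset ι) (c γ : ι → ℝ)
    (hγ : ∀ i ∈ s, -1 < γ i) (hρ : 0 < ρ) (hx : -1 < x) :
    Iminus ρ (fun y => ∑ i ∈ s, c i * ((1 + y) ^ γ i / Real.Gamma (γ i + 1))) x =
      ∑ i ∈ s, c i * ((1 + x) ^ (γ i + ρ) / Real.Gamma (γ i + ρ + 1)) := by
  have hterm : ∀ i, (fun y => c i * ((1 + y) ^ γ i / Real.Gamma (γ i + 1))) =
      fun y => c i / Real.Gamma (γ i + 1) * (1 + y) ^ γ i := fun i => by ext; ring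
  rw [Iminus_finset_sum s _ fun i hi => ?_]
  · refine sum_congr rfl fun i hi => ?_
    have := (Real.Gamma_pos_of_pos (show 0 < γ i + 1 by linarith [hγ i hi])).ne'
    rw [hterm, Iminus_const_mul, Iminus_one_add_rpow (hγ i hi) hρ hx]
    field_simp
  · convert (intervalIntegrable_sub_rpow_mul_one_add_rpow (hγ i hi) hρ hx).const_mul
      (c i / Real.Gamma (γ i + 1)) using 1
    ext y
    ring

/-- Lemma 2.5, left integral / Bateman formula. -/
theorem stmt3 (ρ α β : ℝ) (hρ : 0 < ρ) (hβ : -1 < β) (n : ℕ) :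
    ∀ x ∈ Set.Ioo (-1 : ℝ) 1,
      Iminus ρ (fun y => (1 + y) ^ β * jacobiP α β n y) x =
        Real.Gamma ((n : ℝ) + β + 1) / Real.Gamma ((n : ℝ) + β + ρ + 1) *
          ((1 + x) ^ (β + ρ) * jacobiP (α - ρ) (β + ρ) n x) := by
  intro x ⟨hx, _⟩
  rw [Iminus_congr fun y hy => one_add_rpow_mul_jacobiP_eq_Gamma_mul_sum α hβ n
      (by rw [Set.uIoc_of_le hx.le] at hy; exact hy.1),
    Iminus_const_mul, Iminus_sum_mul_one_add_rpow_div_Gamma _ _ _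
      (fun j _ => by linarith [(j.cast_nonneg : (0 : ℝ) ≤ j)]) hρ hx,
    one_add_rpow_mul_jacobiP_eq_Gamma_mul_sum (α - ρ) (show -1 < β + ρ by linarith) n hx,
    show (n : ℝ) + (α - ρ) + (β + ρ) + 1 = n + α + β + 1 by ring,
    show (n : ℝ) + (β + ρ) + 1 = n + β + ρ + 1 by ring]
  simp_rw [add_right_comm β _ ρ]
  have hΓ : Real.Gamma (n + β + ρ + 1) ≠ 0 :=
    (Real.Gamma_pos_of_pos (by linarith [(n.cast_nonneg : (0 : ℝ) ≤ n)])).ne'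
  field_simp
end

section
/- Let l, m ∈ ℕ (l, m ≥ 1) and let n be an integer with n ≥ l + m. Then for all x ∈ ℝ, the Jacobi polynomial with negative integer parameters factors as P_n^{(−l,−m)}(x) = ((x−1)/2)^l · ((x+1)/2)^m · P_{n−l−m}^{(l,m)}(x). -/
open MeasureTheory Filter Finset

/-!
Put u = (x - 1)/2. The coefficient of u^k in P_N^{(l,m)} is C(N+l+m+k, k) C(N+l, N-k). In
P_{N+l+m}^{(-l,-m)} the factor (j - l + 1)_{n-j} vanishes for j < l, which leaves
u^l Σ_i C(N+l+i, N) C(N+m, i) u^i. As (x + 1)/2 = 1 + u, it remains to show that this last sum is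
(1 + u)^m times the first one. Both sides satisfy the same Pascal-type recurrence in (N, m) and agree
for N = 0 and for m = 0, so a double induction finishes the proof.
-/

lemma Nat.add_choose_mul_choose_sub {N k : ℕ} (l : ℕ) (hk : k ≤ N) :
    (N + l + k).choose k * (N + l).choose (N - k) = (N + l + k).choose N * N.choose k := by
  rw [Nat.choose_mul hk, Nat.add_sub_cancel]

lemma ascPochhammer_eval_natCast_succ_div_factorial {K : Type*} [Field K] [CharZero K]
    (a k : ℕ) : (ascPochhammer K k).eval ((a : K) + 1) / k.factorial = ((a + k).choose k : K) := by
  rw [← Nat.cast_succ, ← Nat.cast_ascFactorial, Nat.ascFactorial_eq_factorial_mul_choose,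
    Nat.cast_mul, mul_div_cancel_left₀ _ (Nat.cast_ne_zero.mpr k.factorial_ne_zero)]

section BinomialSums

variable {R : Type*} [CommSemiring R]

def jacobiBinomSum (N l m : ℕ) (u : R) : R :=
  ∑ k ∈ range (N + 1), ((N + l + m + k).choose k : R) * ((N + l).choose (N - k) : R) * u ^ k

def jacobiNegBinomSum (N l m : ℕ) (u : R) : R :=
  ∑ i ∈ range (N + m + 1), ((N + l + i).choose N : R) * ((N + m).choose i : R) * u ^ i

lemma jacobiBinomSum_zero_left (l m : ℕ) (u : R) : jacobiBinomSum 0 l m u = 1 := by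
  simp [jacobiBinomSum]

lemma jacobiNegBinomSum_zero_left (l m : ℕ) (u : R) : jacobiNegBinomSum 0 l m u = (1 + u) ^ m := by
  rw [jacobiNegBinomSum, add_comm 1 u, add_pow]
  refine sum_congr (by simp) fun i _ => ?_
  simp [mul_comm]

lemma jacobiNegBinomSum_zero_right (N l : ℕ) (u : R) :
    jacobiNegBinomSum N l 0 u = jacobiBinomSum N l 0 u := by
  refine sum_congr (by simp) fun k hk => ?_
  rw [Nat.add_zero, Nat.add_zero, ← Nat.cast_mul, ← Nat.add_choose_mul_choose_sub l
    (Nat.lt_succ_iff.mp (mem_range.mp hk)), Nat.cast_mul]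

lemma jacobiBinomSum_succ_succ (N l m : ℕ) (u : R) :
    jacobiBinomSum (N + 1) l (m + 1) u =
      jacobiBinomSum (N + 1) l m u + u * jacobiBinomSum N (l + 1) (m + 1) u := by
  simp only [jacobiBinomSum, sum_range_succ' _ (N + 1), mul_sum]
  have pascal : ∀ k ∈ range (N + 1),
      ((N + 1 + l + (m + 1) + (k + 1)).choose (k + 1) : R) * ((N + 1 + l).choose (N + 1 - (k + 1)))
        * u ^ (k + 1) =
      ((N + 1 + l + m + (k + 1)).choose (k + 1) : R) * ((N + 1 + l).choose (N + 1 - (k + 1)))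
        * u ^ (k + 1) +
      u * (((N + (l + 1) + (m + 1) + k).choose k : R) * ((N + (l + 1)).choose (N - k)) * u ^ k) := by
    intro k _
    rw [show N + 1 + l + (m + 1) + (k + 1) = (N + 1 + l + m + (k + 1)) + 1 by omega,
      Nat.choose_succ_succ', show N + 1 + l + m + (k + 1) = N + (l + 1) + (m + 1) + k by omega,
      show N + 1 - (k + 1) = N - k by omega, show N + 1 + l = N + (l + 1) by omega]
    push_cast
    ring
  rw [sum_congr rfl pascal, sum_add_distrib]
  simp only [Nat.choose_zero_right, Nat.cast_one, one_mul, pow_zero, mul_one]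
  ring

lemma jacobiNegBinomSum_succ_succ (N l m : ℕ) (u : R) :
    jacobiNegBinomSum (N + 1) l (m + 1) u =
      (1 + u) * jacobiNegBinomSum (N + 1) l m u + u * jacobiNegBinomSum N (l + 1) (m + 1) u := by
  have extend : jacobiNegBinomSum (N + 1) l m u =
      ∑ i ∈ range (N + 1 + m + 2), ((N + 1 + l + i).choose (N + 1) : R) *
        ((N + 1 + m).choose i : R) * u ^ i := by
    rw [sum_range_succ _ (N + 1 + m + 1), Nat.choose_eq_zero_of_lt (by omega : N + 1 + m < _)]
    simp only [Nat.cast_zero, mul_zero, zero_mul, add_zero, jacobiNegBinomSum]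
  rw [add_mul, one_mul]
  nth_rewrite 1 [extend]
  simp only [jacobiNegBinomSum, sum_range_succ' _ (N + 1 + m + 1), mul_sum,
    show N + 1 + (m + 1) + 1 = N + 1 + m + 2 by omega, show N + (m + 1) + 1 = N + 1 + m + 1 by omega]
  have pascal : ∀ i ∈ range (N + 1 + m + 1),
      ((N + 1 + l + (i + 1)).choose (N + 1) : R) * ((N + 1 + (m + 1)).choose (i + 1)) *
        u ^ (i + 1) =
      ((N + 1 + l + (i + 1)).choose (N + 1) : R) * ((N + 1 + m).choose (i + 1)) * u ^ (i + 1) +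
      (u * (((N + 1 + l + i).choose (N + 1) : R) * ((N + 1 + m).choose i) * u ^ i) +
      u * (((N + (l + 1) + i).choose N : R) * ((N + (m + 1)).choose i) * u ^ i)) := by
    intro i _
    rw [show N + 1 + (m + 1) = N + 1 + m + 1 by omega, Nat.choose_succ_succ',
      show N + 1 + l + (i + 1) = (N + (l + 1) + i) + 1 by omega, Nat.choose_succ_succ',
      show N + (l + 1) + i = N + 1 + l + i by omega, show N + (m + 1) = N + 1 + m by omega]
    push_cast
    ring
  rw [sum_congr rfl pascal, sum_add_distrib, sum_add_distrib]
  simp only [Nat.choose_zero_right, Nat.cast_one, pow_zero, mul_one]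
  ring

theorem jacobiNegBinomSum_eq_one_add_pow_mul (N l m : ℕ) (u : R) :
    jacobiNegBinomSum N l m u = (1 + u) ^ m * jacobiBinomSum N l m u := by
  induction N generalizing l m with
  | zero => rw [jacobiNegBinomSum_zero_left, jacobiBinomSum_zero_left, mul_one]
  | succ N ihN =>
    induction m generalizing l with
    | zero => rw [jacobiNegBinomSum_zero_right, pow_zero, one_mul]
    | succ m ihm =>
      rw [jacobiNegBinomSum_succ_succ, ihm, ihN, jacobiBinomSum_succ_succ]
      ring

end BinomialSums

lemma jacobiP_natCast (N l m : ℕ) (x : ℝ) :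
    jacobiP l m N x = jacobiBinomSum N l m ((x - 1) / 2) := by
  refine sum_congr rfl fun k hk => ?_
  have hkN : k ≤ N := Nat.lt_succ_iff.mp (mem_range.mp hk)
  rw [show (N : ℝ) + l + m + 1 = ((N + l + m : ℕ) : ℝ) + 1 by push_cast; ring,
    show (l : ℝ) + k + 1 = ((l + k : ℕ) : ℝ) + 1 by push_cast; ring,
    ascPochhammer_eval_natCast_succ_div_factorial, ascPochhammer_eval_natCast_succ_div_factorial,
    show l + k + (N - k) = N + l by omega]

lemma jacobiP_neg_natCast (N l m : ℕ) (x : ℝ) :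
    jacobiP (-l) (-m) (N + l + m) x =
      ((x - 1) / 2) ^ l * jacobiNegBinomSum N l m ((x - 1) / 2) := by
  rw [jacobiP, show N + l + m + 1 = l + (N + m + 1) by omega, sum_range_add]
  have below_l : ∀ j ∈ range l,
      (ascPochhammer ℝ (N + l + m - j)).eval (-(l : ℝ) + j + 1) = 0 := by
    intro j hj
    have hjl := mem_range.mp hj
    rw [show -(l : ℝ) + j + 1 = -((l - 1 - j : ℕ) : ℝ) by
      rw [Nat.sub_sub, Nat.cast_sub (by omega)]; push_cast; ring]
    exact ascPochhammer_eval_neg_coe_nat_of_lt (by omega)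
  rw [sum_eq_zero fun j hj => by rw [below_l j hj, zero_div, mul_zero, zero_mul], zero_add,
    jacobiNegBinomSum, mul_sum]
  refine sum_congr rfl fun i hi => ?_
  have hiN : i ≤ N + m := Nat.lt_succ_iff.mp (mem_range.mp hi)
  rw [show ((N + l + m : ℕ) : ℝ) + -l + -m + 1 = (N : ℝ) + 1 by push_cast; ring,
    show -(l : ℝ) + ((l + i : ℕ) : ℝ) + 1 = (i : ℝ) + 1 by push_cast; ring,
    ascPochhammer_eval_natCast_succ_div_factorial, ascPochhammer_eval_natCast_succ_div_factorial,
    show N + l + m - (l + i) = N + m - i by omega, show i + (N + m - i) = N + m by omega,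
    Nat.choose_symm hiN, show N + (l + i) = N + l + i by omega,
    Nat.choose_symm_of_eq_add (show N + l + i = (l + i) + N by omega), pow_add]
  ring

theorem stmt7_general (l m : ℕ) (n : ℕ) (hn : l + m ≤ n) (x : ℝ) :
    jacobiP (-(l : ℝ)) (-(m : ℝ)) n x =
      ((x - 1) / 2) ^ l * ((x + 1) / 2) ^ m * jacobiP (l : ℝ) (m : ℝ) (n - l - m) x := by
  obtain ⟨N, rfl⟩ : ∃ N, n = N + l + m := ⟨n - l - m, by omega⟩
  rw [jacobiP_neg_natCast, jacobiNegBinomSum_eq_one_add_pow_mul, jacobiP_natCast,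
    show N + l + m - l - m = N by omega, show (x + 1) / 2 = 1 + (x - 1) / 2 by ring]
  ring

/-- factorization of Jacobi polynomials with negative integer parameters. -/
theorem stmt7 (l m : ℕ) (hl : 1 ≤ l) (hm : 1 ≤ m) (n : ℕ) (hn : l + m ≤ n) (x : ℝ) :
    jacobiP (-(l : ℝ)) (-(m : ℝ)) n x =
      ((x - 1) / 2) ^ l * ((x + 1) / 2) ^ m * jacobiP (l : ℝ) (m : ℝ) (n - l - m) x :=
  stmt7_general l m n hn x
end
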